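/- arXiv:1801.00466 — 4 statements merged into one kernel-verified Lean document; each statement's English description precedes it below -/
import Mathlib

section
/- With s_n defined by s_0 = 0, s_1 = 1, s_n = 4s_{n−1} + 4s_{n−2}, and p_n the Pell numbers, the ratio s_n/p_n² tends to 0 as n → ∞. -/
def pell : ℕ → ℕ
  | 0 => 0
  | 1 => 1
  | n + 2 => 2 * pell (n + 1) + pell n

def s : ℕ → ℕ
  | 0 => 0
  | 1 => 1
  | n + 2 => 4 * s (n + 1) + 4 * s n

/-!
The recurrence for `s` gives `s n ≤ 5 ^ n`, while `pell (n + 1) ≥ (12/5) ^ n / 2` because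
`x = 12/5` satisfies `x ^ 2 ≤ 2 * x + 1`, so the geometric lower bound survives the Pell
recurrence. Since `5 < (12/5) ^ 2`, the ratio `s n / pell n ^ 2` decays like `(125/144) ^ n`.
-/

open Filter

theorem s_le_five_pow : ∀ n, s n ≤ 5 ^ n
  | 0 => by simp [s]
  | 1 => by simp [s]
  | n + 2 => by
    have h₁ := s_le_five_pow (n + 1)
    have h₀ := s_le_five_pow n
    rw [s, pow_succ, pow_succ] at *
    omega

theorem twelve_pow_le_pell_succ : ∀ n, 12 ^ n ≤ 2 * 5 ^ n * pell (n + 1)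
  | 0 => by simp [pell]
  | 1 => by simp [pell]
  | n + 2 => by
    have h₁ := twelve_pow_le_pell_succ (n + 1)
    have h₀ := twelve_pow_le_pell_succ n
    rw [pell]
    simp only [pow_succ] at *
    generalize 12 ^ n = a at *
    generalize 5 ^ n = b at *
    nlinarith

theorem pell_succ_pos (n : ℕ) : 0 < pell (n + 1) :=
  Nat.pos_of_mul_pos_left ((pow_pos (by norm_num) n).trans_le (twelve_pow_le_pell_succ n))

theorem pow_mul_s_succ_le_pell_succ_sq (n : ℕ) :
    144 ^ n * s (n + 1) ≤ 20 * 125 ^ n * pell (n + 1) ^ 2 :=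
  calc 144 ^ n * s (n + 1) ≤ (12 ^ n) ^ 2 * 5 ^ (n + 1) := by
        rw [← pow_mul, mul_comm n, pow_mul]
        exact Nat.mul_le_mul_left _ (s_le_five_pow _)
    _ ≤ (2 * 5 ^ n * pell (n + 1)) ^ 2 * 5 ^ (n + 1) := by
        gcongr; exact twelve_pow_le_pell_succ n
    _ = 20 * 125 ^ n * pell (n + 1) ^ 2 := by
        rw [show (125 : ℕ) = 5 ^ 3 by norm_num, ← pow_mul]; ring

theorem area_fraction_succ_le (n : ℕ) :
    (s (n + 1) : ℝ) / (pell (n + 1) : ℝ) ^ 2 ≤ 20 * (125 / 144) ^ n := by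
  have h : (144 : ℝ) ^ n * s (n + 1) ≤ 20 * 125 ^ n * pell (n + 1) ^ 2 := by
    exact_mod_cast pow_mul_s_succ_le_pell_succ_sq n
  have hp : (0 : ℝ) < pell (n + 1) := by exact_mod_cast pell_succ_pos n
  rw [div_le_iff₀ (by positivity), div_pow, mul_div_assoc', div_mul_eq_mul_div,
    le_div_iff₀' (by positivity)]
  exact h

theorem area_fraction_tendsto_zero :
    Filter.Tendsto (fun n => (s n : ℝ) / (pell n : ℝ) ^ 2) Filter.atTop (nhds 0) := by
  rw [← tendsto_add_atTop_iff_nat 1]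
  refine squeeze_zero (fun n => by positivity) area_fraction_succ_le ?_
  simpa using (tendsto_pow_atTop_nhds_zero_of_lt_one (by norm_num : (0 : ℝ) ≤ 125 / 144)
    (by norm_num)).const_mul 20
end

section
/- With s_n defined by s_0 = 0, s_1 = 1, s_n = 4s_{n−1} + 4s_{n−2}, the limit of (log s_n)/(log p_n) as n → ∞ equals 1 + log 2 / log(1+√2). -/
/-!
The Pell numbers satisfy Binet's formula `2√2 pₙ = (1 + √2)ⁿ - (1 - √2)ⁿ`, so `pₙ` grows like a
constant times `(1 + √2)ⁿ`, and `2 sₙ = 2ⁿ pₙ` makes `sₙ` grow like a constant times `(2 + 2√2)ⁿ`.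
Hence `log sₙ / n → log 2 + log (1 + √2)` and `log pₙ / n → log (1 + √2)`, and the quotient of
the two limits is the claimed dimension.
-/

open Filter Real Topology

lemma tendsto_log_div_natCast_of_tendsto_div_pow {u : ℕ → ℝ} {r c : ℝ} (hr : 0 < r) (hc : 0 < c)
    (h : Tendsto (fun n => u n / r ^ n) atTop (𝓝 c)) :
    Tendsto (fun n : ℕ => log (u n) / n) atTop (𝓝 (log r)) := by
  have hlog : Tendsto (fun n => log (u n / r ^ n)) atTop (𝓝 (log c)) :=
    (continuousAt_log hc.ne').tendsto.comp h
  have hsmall : Tendsto (fun n : ℕ => log (u n / r ^ n) / n + log r) atTop (𝓝 (0 + log r)) :=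
    (hlog.div_atTop tendsto_natCast_atTop_atTop).add_const _
  rw [zero_add] at hsmall
  refine hsmall.congr' ?_
  filter_upwards [h.eventually (lt_mem_nhds hc), eventually_ne_atTop 0] with n hpos hn
  have hu : u n ≠ 0 := by
    rintro hu
    simp [hu] at hpos
  rw [log_div hu (pow_ne_zero n hr.ne'), log_pow]
  field_simp
  ring

lemma two_mul_s (n : ℕ) : 2 * s n = 2 ^ n * pell n := by
  induction n using Nat.twoStepInduction with
  | zero => rfl
  | one => rfl
  | more n ih₀ ih₁ =>
    simp only [s, pell]
    linear_combination 4 * ih₁ + 4 * ih₀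

lemma pell_binet (n : ℕ) : 2 * √2 * pell n = (1 + √2) ^ n - (1 - √2) ^ n := by
  have hsq : √2 ^ 2 = 2 := sq_sqrt zero_le_two
  induction n using Nat.twoStepInduction with
  | zero => simp [pell]
  | one => simp [pell]; ring
  | more n ih₀ ih₁ =>
    simp only [pell, Nat.cast_add, Nat.cast_mul, Nat.cast_ofNat]
    linear_combination 2 * ih₁ + ih₀ + ((1 - √2) ^ n - (1 + √2) ^ n) * hsq

lemma tendsto_pell_div_pow :
    Tendsto (fun n => (pell n : ℝ) / (1 + √2) ^ n) atTop (𝓝 (1 / (2 * √2))) := by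
  have hratio : |(1 - √2) / (1 + √2)| < 1 := by
    have h_one_lt : 1 < √2 := by rw [lt_sqrt zero_le_one]; norm_num
    rw [abs_div, abs_of_neg (by linarith), abs_of_pos (by linarith), div_lt_one (by linarith)]
    linarith
  have hlim : Tendsto (fun n => (1 - ((1 - √2) / (1 + √2)) ^ n) / (2 * √2)) atTop
      (𝓝 ((1 - 0) / (2 * √2))) :=
    ((tendsto_pow_atTop_nhds_zero_of_abs_lt_one hratio).const_sub 1).div_const _
  rw [sub_zero] at hlim
  refine hlim.congr fun n => ?_
  rw [div_pow]
  field_simp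
  linear_combination (pell_binet n).symm

lemma tendsto_s_div_pow :
    Tendsto (fun n => (s n : ℝ) / (2 * (1 + √2)) ^ n) atTop (𝓝 (1 / (2 * √2) / 2)) := by
  refine (tendsto_pell_div_pow.div_const 2).congr fun n => ?_
  have h : (2 * s n : ℝ) = 2 ^ n * pell n := by exact_mod_cast two_mul_s n
  rw [mul_pow, eq_div_iff (by positivity)]
  field_simp
  linear_combination -h

theorem box_dimension :
    Filter.Tendsto (fun n => Real.log (s n) / Real.log (pell n)) Filter.atTop
      (nhds (1 + Real.log 2 / Real.log (1 + Real.sqrt 2))) := by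
  have ha : 1 < 1 + √2 := by simp
  have hlog_ne : log (1 + √2) ≠ 0 := (log_pos ha).ne'
  have hpell := tendsto_log_div_natCast_of_tendsto_div_pow (by positivity) (by positivity)
    tendsto_pell_div_pow
  have hs := tendsto_log_div_natCast_of_tendsto_div_pow (by positivity) (by positivity)
    tendsto_s_div_pow
  have hquot := hs.div hpell hlog_ne
  rw [log_mul two_ne_zero (by positivity), add_div, div_self hlog_ne, add_comm] at hquot
  refine hquot.congr' ?_
  filter_upwards [eventually_ne_atTop 0] with n hn
  exact div_div_div_cancel_right₀ (Nat.cast_ne_zero.mpr hn) _ _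
end

section
/- With c_n defined by c_0 = 0, c_1 = 1, c_n = 8c_{n−1} + 12c_{n−2}, and p_n the Pell numbers, the ratio c_n/p_n³ tends to 0 as n → ∞. -/
def c : ℕ → ℕ
  | 0 => 0
  | 1 => 1
  | n + 2 => 8 * c (n + 1) + 12 * c n

theorem le_of_two_step_recurrence {α : Type*} [Semiring α] [PartialOrder α] [IsOrderedRing α]
    {a b : α} {u v : ℕ → α} (ha : 0 ≤ a) (hb : 0 ≤ b)
    (hu : ∀ n, u (n + 2) ≤ a * u (n + 1) + b * u n)
    (hv : ∀ n, a * v (n + 1) + b * v n ≤ v (n + 2))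
    (h0 : u 0 ≤ v 0) (h1 : u 1 ≤ v 1) (n : ℕ) : u n ≤ v n := by
  induction n using Nat.twoStepInduction with
  | zero => exact h0
  | one => exact h1
  | more n ih ih' =>
    calc u (n + 2) ≤ a * u (n + 1) + b * u n := hu n
      _ ≤ a * v (n + 1) + b * v n := by gcongr
      _ ≤ v (n + 2) := hv n

theorem c_le_ten_pow (n : ℕ) : c n ≤ 10 ^ n := by
  refine le_of_two_step_recurrence (a := 8) (b := 12) (Nat.zero_le _) (Nat.zero_le _)
    (fun n => (c.eq_3 n).le) (fun n => ?_) (by simp [c]) (by simp [c]) n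
  rw [pow_succ, pow_succ, pow_succ]
  omega

theorem twelve_fifths_pow_div_two_le_pell_succ (n : ℕ) : (12 / 5 : ℝ) ^ n / 2 ≤ pell (n + 1) := by
  refine le_of_two_step_recurrence (a := 2) (b := 1) (u := fun n => (12 / 5 : ℝ) ^ n / 2)
    (v := fun n => (pell (n + 1) : ℝ)) zero_le_two zero_le_one (fun n => ?_) (fun n => ?_)
    (by norm_num [pell]) (by norm_num [pell]) n
  · have : 0 ≤ (12 / 5 : ℝ) ^ n := by positivity
    simp only [pow_succ]
    nlinarith
  · simp [pell]

theorem volume_fraction_tendsto_zero :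
    Filter.Tendsto (fun n => (c n : ℝ) / (pell n : ℝ) ^ 3) Filter.atTop (nhds 0) := by
  rw [← Filter.tendsto_add_atTop_iff_nat 1]
  have hgeom : Filter.Tendsto (fun n : ℕ => 80 * (625 / 864 : ℝ) ^ n) Filter.atTop (nhds 0) := by
    simpa using (tendsto_pow_atTop_nhds_zero_of_lt_one (by norm_num : (0 : ℝ) ≤ 625 / 864)
      (by norm_num)).const_mul 80
  refine squeeze_zero (fun n => by positivity) (fun n => ?_) hgeom
  have hc : (c (n + 1) : ℝ) ≤ 10 ^ (n + 1) := by exact_mod_cast c_le_ten_pow (n + 1)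
  have hp : ((12 / 5 : ℝ) ^ n / 2) ^ 3 ≤ (pell (n + 1) : ℝ) ^ 3 := by
    gcongr
    exact twelve_fifths_pow_div_two_le_pell_succ n
  calc (c (n + 1) : ℝ) / (pell (n + 1) : ℝ) ^ 3
      ≤ 10 ^ (n + 1) / ((12 / 5 : ℝ) ^ n / 2) ^ 3 := by gcongr
    _ = 80 * (625 / 864 : ℝ) ^ n := by
      rw [div_eq_iff (by positivity), div_pow ((12 / 5 : ℝ) ^ n), ← pow_mul, mul_comm n 3,
        pow_mul, pow_succ, show (10 : ℝ) = 625 / 864 * (12 / 5) ^ 3 by norm_num, mul_pow]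
      ring
end

section
/- With c_n defined by c_0 = 0, c_1 = 1, c_n = 8c_{n−1} + 12c_{n−2}, the limit of (log c_n)/(log p_n) as n → ∞ equals log(4+2√7)/log(1+√2). -/
/-! If `u 0 = 0`, `u 1 = 1` and `u (n + 2) = p u (n + 1) + q u n`, and `a ≥ 1` is a root of
`x² = p x + q`, then induction on the recurrence squeezes `u n` between `a ^ n / a²` and `a ^ n`,
so `log (u n) / n → log a`. The dimension is the quotient of these growth rates for `c`
(`a = 4 + 2√7`) and for the Pell numbers (`a = 1 + √2`). -/

open Filter Real Topology

theorem tendsto_log_div_natCast_of_pow_bounds {a C : ℝ} (ha : 0 < a) (hC : 0 < C) {u : ℕ → ℝ}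
    (hup : ∀ᶠ n in atTop, u n ≤ a ^ n) (hlow : ∀ᶠ n in atTop, a ^ n ≤ C * u n) :
    Tendsto (fun n => log (u n) / n) atTop (𝓝 (log a)) := by
  have hlim : Tendsto (fun n : ℕ => log a - log C / n) atTop (𝓝 (log a)) := by
    simpa using tendsto_const_nhds.sub
      ((tendsto_const_nhds (x := log C)).div_atTop tendsto_natCast_atTop_atTop)
  refine tendsto_of_tendsto_of_tendsto_of_le_of_le' hlim tendsto_const_nhds ?_ ?_
  all_goals
    filter_upwards [hup, hlow, eventually_gt_atTop 0] with n hup hlow hn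
    have hn : (0 : ℝ) < n := Nat.cast_pos.2 hn
    have hu : 0 < u n := pos_of_mul_pos_right ((pow_pos ha n).trans_le hlow) hC.le
  · have := log_le_log (pow_pos ha n) hlow
    rw [log_mul hC.ne' hu.ne', log_pow] at this
    rw [sub_le_iff_le_add, ← add_div, le_div_iff₀ hn]
    linarith
  · have := log_le_log hu hup
    rwa [log_pow, ← div_le_iff₀' hn] at this

section LinearRecurrence

variable {u : ℕ → ℕ} {p q : ℕ} {a : ℝ}

theorem natCast_le_pow_of_recurrence (h0 : u 0 = 0) (h1 : u 1 = 1)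
    (hrec : ∀ n, u (n + 2) = p * u (n + 1) + q * u n) (ha : 1 ≤ a) (hroot : a ^ 2 = p * a + q) :
    ∀ n, (u n : ℝ) ≤ a ^ n
  | 0 => by simp [h0]
  | 1 => by simpa [h1] using ha
  | n + 2 => by
    have ih₀ := natCast_le_pow_of_recurrence h0 h1 hrec ha hroot n
    have ih₁ := natCast_le_pow_of_recurrence h0 h1 hrec ha hroot (n + 1)
    calc (u (n + 2) : ℝ) = p * u (n + 1) + q * u n := by rw [hrec]; push_cast; ring
      _ ≤ p * a ^ (n + 1) + q * a ^ n := by gcongr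
      _ = a ^ (n + 2) := by rw [pow_add _ n 2, hroot]; ring

theorem pow_le_mul_natCast_of_recurrence (h1 : u 1 = 1)
    (hrec : ∀ n, u (n + 2) = p * u (n + 1) + q * u n) (hp : 1 ≤ p) (ha : 1 ≤ a)
    (hroot : a ^ 2 = p * a + q) : ∀ n, a ^ n ≤ a * u (n + 1)
  | 0 => by simpa [h1] using ha
  | 1 => by
    have : (1 : ℝ) ≤ u 2 := by
      rw [hrec, h1, mul_one]; exact_mod_cast hp.trans (Nat.le_add_right _ _)
    nlinarith
  | n + 2 => by
    have ih₀ := pow_le_mul_natCast_of_recurrence h1 hrec hp ha hroot n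
    have ih₁ := pow_le_mul_natCast_of_recurrence h1 hrec hp ha hroot (n + 1)
    calc a ^ (n + 2) = p * a ^ (n + 1) + q * a ^ n := by rw [pow_add _ n 2, hroot]; ring
      _ ≤ p * (a * u (n + 2)) + q * (a * u (n + 1)) := by gcongr
      _ = a * u (n + 3) := by rw [hrec (n + 1)]; push_cast; ring

theorem tendsto_log_div_natCast_of_recurrence (h0 : u 0 = 0) (h1 : u 1 = 1)
    (hrec : ∀ n, u (n + 2) = p * u (n + 1) + q * u n) (hp : 1 ≤ p) (ha : 1 ≤ a)
    (hroot : a ^ 2 = p * a + q) :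
    Tendsto (fun n => log (u n) / n) atTop (𝓝 (log a)) := by
  refine tendsto_log_div_natCast_of_pow_bounds (C := a ^ 2) (by linarith) (by positivity)
    (.of_forall (natCast_le_pow_of_recurrence h0 h1 hrec ha hroot)) ?_
  filter_upwards [eventually_ge_atTop 1] with n hn
  obtain ⟨m, rfl⟩ := Nat.exists_eq_add_of_le' hn
  have := pow_le_mul_natCast_of_recurrence h1 hrec hp ha hroot m
  calc a ^ (m + 1) = a * a ^ m := pow_succ' a m
    _ ≤ a * (a * u (m + 1)) := by gcongr
    _ = a ^ 2 * u (m + 1) := by ring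

end LinearRecurrence

theorem cube_box_dimension :
    Filter.Tendsto (fun n => Real.log (c n) / Real.log (pell n)) Filter.atTop
      (nhds (Real.log (4 + 2 * Real.sqrt 7) / Real.log (1 + Real.sqrt 2))) := by
  have hsqrt7 : √7 ^ 2 = 7 := sq_sqrt (by norm_num)
  have hsqrt2 : √2 ^ 2 = 2 := sq_sqrt (by norm_num)
  have hsqrt2_pos : 0 < √2 := by positivity
  have hc := tendsto_log_div_natCast_of_recurrence (u := c) (p := 8) (q := 12)
    (a := 4 + 2 * √7) rfl rfl (fun _ => rfl) (by norm_num)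
    (by linarith [sqrt_nonneg 7]) (by push_cast; nlinarith)
  have hpell := tendsto_log_div_natCast_of_recurrence (u := pell) (p := 2) (q := 1)
    (a := 1 + √2) rfl rfl (fun n => by simp [pell]) (by norm_num)
    (by linarith) (by push_cast; nlinarith)
  refine (hc.div hpell (log_pos (by linarith)).ne').congr' ?_
  filter_upwards [eventually_ne_atTop 0] with n hn
  exact div_div_div_cancel_right₀ (Nat.cast_ne_zero.2 hn) _ _
end
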